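/- Let k be an algebraically closed field of characteristic two. The map Φ(v, A) := (v vᵀ + A)·J is a bijection from the exotic nilpotent cone E := {(v, A) : v ∈ k^{2n}, A an alternating 2n×2n matrix over k, A·J nilpotent} onto the nilpotent cone N := {X ∈ Mat(2n, k) : Xᵀ J + J X = 0, X nilpotent} of sp(2n, k), and it satisfies Φ(g v, g A gᵀ) = g · Φ(v, A) · g⁻¹ for every g ∈ Sp(2n, k). Consequently Φ induces a bijection between the set of Sp(2n, k)-orbits on E and the set of Sp(2n, k)-conjugacy orbits on N. -/

import Mathlib

/-!
In characteristic two, `X ∈ sp(2n)` exactly when `X J` is symmetric, and a symmetric matrix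
`S` splits uniquely as `v vᵀ + A` with `A` alternating: `v` is the vector of square roots of
the diagonal of `S`, which exist in a perfect field and are unique since squaring is injective.
Nilpotency survives the splitting because
`charpoly ((v vᵀ + A) J) = det (t J + A + v vᵀ) * det (-J)`, and a rank-one term `v vᵀ` does
not change the determinant of an invertible alternating matrix `B` (matrix determinant lemma:
`vᵀ B⁻¹ v = 0` as `B⁻¹` is again alternating). For symplectic `g` one has `g⁻¹ = -J gᵀ J`,
which gives the equivariance, so the bijection descends to orbits.
-/

open Matrix

/-- The standard symplectic form matrix `J = [[0, −1ₙ], [1ₙ, 0]]`. -/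
def Jmat (n : ℕ) (R : Type*) [CommRing R] :
    Matrix (Fin n ⊕ Fin n) (Fin n ⊕ Fin n) R :=
  Matrix.fromBlocks 0 (-1) 1 0

/-- The exotic nilpotent cone `E`: pairs `(v, A)` with `A` alternating
(characteristic two convention: `Aᵀ = A` with zero diagonal) and `A·J`
nilpotent. -/
def ExoticCone (n : ℕ) (k : Type*) [Field k] : Type _ :=
  {p : (Fin n ⊕ Fin n → k) × Matrix (Fin n ⊕ Fin n) (Fin n ⊕ Fin n) k //
    p.2ᵀ = p.2 ∧ (∀ i, p.2 i i = 0) ∧ IsNilpotent (p.2 * Jmat n k)}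

/-- The nilpotent cone `N` of `sp(2n, k)`: nilpotent matrices `X` with
`Xᵀ J + J X = 0`. -/
def SpNilCone (n : ℕ) (k : Type*) [Field k] : Type _ :=
  {M : Matrix (Fin n ⊕ Fin n) (Fin n ⊕ Fin n) k //
    Mᵀ * Jmat n k + Jmat n k * M = 0 ∧ IsNilpotent M}

/-- The orbit relation on `E` for the action `g · (v, A) = (g v, g A gᵀ)`. -/
def exoticOrbitRel (n : ℕ) (k : Type*) [Field k] :
    ExoticCone n k → ExoticCone n k → Prop := fun p q =>
  ∃ g : Matrix (Fin n ⊕ Fin n) (Fin n ⊕ Fin n) k,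
    g * Jmat n k * gᵀ = Jmat n k ∧
    q.1.1 = g.mulVec p.1.1 ∧ q.1.2 = g * p.1.2 * gᵀ

/-- The orbit relation on `N` for the conjugation action of `Sp(2n, k)`. -/
def spOrbitRel (n : ℕ) (k : Type*) [Field k] :
    SpNilCone n k → SpNilCone n k → Prop := fun M M' =>
  ∃ g : Matrix (Fin n ⊕ Fin n) (Fin n ⊕ Fin n) k,
    g * Jmat n k * gᵀ = Jmat n k ∧ M'.1 = g * M.1 * g⁻¹

open Polynomial

namespace Matrix

variable {ι κ R : Type*} [CommRing R]

def IsAlternating (A : Matrix ι ι R) : Prop := Aᵀ = -A ∧ ∀ i, A i i = 0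

namespace IsAlternating

variable {A : Matrix ι ι R}

lemma apply_swap (hA : A.IsAlternating) (i j : ι) : A j i = -A i j := by
  simpa using congrFun (congrFun hA.1 i) j

lemma submatrix (hA : A.IsAlternating) (f : κ → ι) : (A.submatrix f f).IsAlternating :=
  ⟨by rw [transpose_submatrix, hA.1]; rfl, fun i => hA.2 (f i)⟩

lemma smul (hA : A.IsAlternating) (r : R) : (r • A).IsAlternating :=
  ⟨by rw [transpose_smul, hA.1, smul_neg], fun i => by simp [hA.2 i]⟩

lemma map {S : Type*} [CommRing S] (hA : A.IsAlternating) (f : R →+* S) :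
    (A.map f).IsAlternating :=
  ⟨by rw [← transpose_map, hA.1, Matrix.map_neg _ f.map_neg], fun i => by simp [hA.2 i]⟩

lemma add {B : Matrix ι ι R} (hA : A.IsAlternating) (hB : B.IsAlternating) :
    (A + B).IsAlternating :=
  ⟨by rw [transpose_add, hA.1, hB.1, neg_add], fun i => by simp [hA.2 i, hB.2 i]⟩

variable [Fintype ι]

lemma dotProduct_mulVec_self (hA : A.IsAlternating) (v : ι → R) : v ⬝ᵥ A *ᵥ v = 0 := by
  have hsum : v ⬝ᵥ A *ᵥ v = ∑ p : ι × ι, v p.1 * A p.1 p.2 * v p.2 := by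
    simp only [dotProduct, mulVec, Finset.mul_sum, Fintype.sum_prod_type, mul_assoc]
  rw [hsum]
  refine Finset.sum_involution (fun p _ => p.swap) (fun p _ => ?_) (fun p _ hp hswap => ?_)
    (fun _ _ => Finset.mem_univ _) (fun p _ => p.swap_swap)
  · simp only [Prod.fst_swap, Prod.snd_swap, hA.apply_swap p.1 p.2]
    ring
  · obtain ⟨i, j⟩ := p
    obtain rfl : j = i := congrArg Prod.fst hswap
    simp [hA.2 j] at hp

lemma conj (hA : A.IsAlternating) (g : Matrix κ ι R) : (g * A * gᵀ).IsAlternating := by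
  refine ⟨by rw [transpose_mul, transpose_mul, transpose_transpose, hA.1, Matrix.neg_mul,
    Matrix.mul_neg, Matrix.mul_assoc], fun i => ?_⟩
  rw [← hA.dotProduct_mulVec_self (g i), mul_apply]
  simp only [dotProduct, mulVec, mul_apply, transpose_apply, Finset.mul_sum, Finset.sum_mul]
  rw [Finset.sum_comm]
  exact Finset.sum_congr rfl fun _ _ => Finset.sum_congr rfl fun _ _ => by ring

variable [DecidableEq ι]

/- The terms of `σ` and `σ⁻¹` in the Leibniz expansion cancel, and an involution of a set of
odd size has a fixed point, which kills its term. -/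
lemma det_eq_zero_of_odd (hA : A.IsAlternating) (hodd : Odd (Fintype.card ι)) : A.det = 0 := by
  rw [det_apply]
  refine Finset.sum_involution (fun σ _ => σ⁻¹) (fun σ _ => ?_) (fun σ _ hσ hinv => ?_)
    (fun _ _ => Finset.mem_univ _) (fun σ _ => inv_inv σ)
  · have : ∏ i, A (σ⁻¹ i) i = -∏ i, A (σ i) i := by
      rw [← Equiv.prod_comp σ]
      simp only [Equiv.Perm.inv_def, Equiv.symm_apply_apply, hA.apply_swap (σ _) _]
      rw [Finset.prod_neg, Finset.card_univ, hodd.neg_one_pow, neg_one_mul]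
    rw [Equiv.Perm.sign_inv, this, smul_neg, add_neg_cancel]
  · obtain ⟨i, hi⟩ : ∃ i, σ i = i :=
      Equiv.Perm.exists_fixed_point_of_prime (p := 2) (n := 1) hodd.not_two_dvd_nat
        (by rw [pow_one, sq]; exact inv_eq_iff_mul_eq_one.mp hinv)
    exact hσ (by rw [Finset.prod_eq_zero (Finset.mem_univ i) (by rw [hi, hA.2 i]), smul_zero])

lemma adjugate_apply_self (hA : A.IsAlternating) (heven : Even (Fintype.card ι)) (i : ι) :
    A.adjugate i i = 0 := by
  -- the `(i, i)` cofactor is the determinant of an alternating minor of odd size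
  obtain ⟨m, hm⟩ : ∃ m, Fintype.card ι = m + 1 :=
    Nat.exists_eq_add_one.mpr (Fintype.card_pos_iff.mpr ⟨i⟩)
  let e : Fin (m + 1) ≃ ι := (Fintype.equivFinOfCardEq hm).symm
  have hodd : Odd (Fintype.card (Fin m)) := by
    obtain ⟨r, hr⟩ := heven
    rw [Fintype.card_fin, Nat.odd_iff]
    omega
  have h := congrFun (congrFun (adjugate_submatrix_equiv_self e A) (e.symm i)) (e.symm i)
  rw [submatrix_apply, e.apply_symm_apply, adjugate_fin_succ_eq_det_submatrix,
    ((hA.submatrix e).submatrix _).det_eq_zero_of_odd hodd, mul_zero] at h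
  exact h.symm

lemma adjugate (hA : A.IsAlternating) (heven : Even (Fintype.card ι)) :
    A.adjugate.IsAlternating := by
  refine ⟨?_, hA.adjugate_apply_self heven⟩
  rcases isEmpty_or_nonempty ι with hι | ⟨⟨i⟩⟩
  · exact Subsingleton.elim _ _
  have hodd : Odd (Fintype.card ι - 1) :=
    Nat.Even.sub_odd (Fintype.card_pos_iff.mpr ⟨i⟩) heven odd_one
  rw [adjugate_transpose, hA.1, ← neg_one_smul R A, adjugate_smul, hodd.neg_one_pow, neg_one_smul]

lemma inv (hA : A.IsAlternating) (heven : Even (Fintype.card ι)) : A⁻¹.IsAlternating := by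
  rw [inv_def]
  exact (hA.adjugate heven).smul _

lemma det_add_vecMulVec_self (hA : A.IsAlternating) (heven : Even (Fintype.card ι))
    (hdet : IsUnit A.det) (v : ι → R) : (A + vecMulVec v v).det = A.det := by
  rw [vecMulVec_eq Unit, det_add_replicateCol_mul_replicateRow hdet, Matrix.mul_assoc,
    ← replicateCol_mulVec, replicateRow_mul_replicateCol, (hA.inv heven).dotProduct_mulVec_self]
  simp

lemma det_add_vecMulVec_self_of_det_ne_zero [IsDomain R] (hA : A.IsAlternating)
    (heven : Even (Fintype.card ι)) (hdet : A.det ≠ 0) (v : ι → R) :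
    (A + vecMulVec v v).det = A.det := by
  let f := algebraMap R (FractionRing R)
  have hf : Function.Injective f := IsFractionRing.injective R (FractionRing R)
  have hmap : (A + vecMulVec v v).map f = A.map f + vecMulVec (f ∘ v) (f ∘ v) := by
    ext i j
    simp [vecMulVec_apply]
  apply hf
  rw [RingHom.map_det, RingHom.map_det, RingHom.mapMatrix_apply, RingHom.mapMatrix_apply, hmap,
    (hA.map f).det_add_vecMulVec_self heven _]
  rw [← RingHom.mapMatrix_apply, ← RingHom.map_det]
  exact ((map_ne_zero_iff f hf).mpr hdet).isUnit

end IsAlternating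

lemma vecMulVec_mulVec_self [Fintype ι] (g : Matrix ι ι R) (v : ι → R) :
    vecMulVec (g *ᵥ v) (g *ᵥ v) = g * vecMulVec v v * gᵀ := by
  rw [mul_vecMulVec, vecMulVec_mul, vecMul_transpose]

lemma isNilpotent_iff_charpoly [IsDomain R] [Fintype ι] [DecidableEq ι] (M : Matrix ι ι R) :
    IsNilpotent M ↔ M.charpoly = X ^ Fintype.card ι := by
  refine ⟨fun hM => sub_eq_zero.mp (isNilpotent_charpoly_sub_pow_of_isNilpotent hM).eq_zero,
    fun h => ⟨Fintype.card ι, ?_⟩⟩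
  simpa [h] using aeval_self_charpoly M

end Matrix

namespace Matrix

variable {l R : Type*} [DecidableEq l] [CommRing R]

lemma isAlternating_J : (J l R).IsAlternating :=
  ⟨J_transpose l R, fun i => by cases i <;> simp [J]⟩

variable [Fintype l]

lemma transpose_mul_J_add_J_mul_eq_zero_iff {M : Matrix (l ⊕ l) (l ⊕ l) R} :
    Mᵀ * J l R + J l R * M = 0 ↔ (M * J l R)ᵀ = M * J l R := by
  have hconj : J l R * (Mᵀ * J l R + J l R * M) * J l R = (M * J l R)ᵀ - M * J l R := by
    simp only [transpose_mul, J_transpose, Matrix.mul_add, Matrix.add_mul, Matrix.mul_assoc,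
      J_squared, ← Matrix.mul_assoc (J l R) (J l R), Matrix.neg_mul, Matrix.mul_neg,
      Matrix.one_mul, Matrix.mul_one]
    abel
  rw [← sub_eq_zero (a := (M * J l R)ᵀ), ← hconj]
  refine ⟨fun h => by rw [h, Matrix.mul_zero, Matrix.zero_mul], fun h => ?_⟩
  have := congrArg (fun X => J l R * X * J l R) h
  simpa only [Matrix.mul_assoc, ← Matrix.mul_assoc (J l R) (J l R), J_squared, Matrix.neg_mul,
    Matrix.mul_neg, Matrix.one_mul, Matrix.mul_one, neg_neg, Matrix.mul_zero, Matrix.zero_mul]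
    using this

lemma charpoly_mul_J (S : Matrix (l ⊕ l) (l ⊕ l) R) :
    (S * J l R).charpoly = ((X : R[X]) • J l R[X] + S.map C).det * (-J l R[X]).det := by
  rw [charpoly, ← det_mul, charmatrix, RingHom.mapMatrix_apply, Matrix.map_mul, map_J,
    add_mul, Matrix.mul_neg, Matrix.mul_neg, smul_mul_assoc, J_squared]
  simp [sub_eq_add_neg, smul_one_eq_diagonal]

lemma charpoly_vecMulVec_self_add_mul_J [IsDomain R] {A : Matrix (l ⊕ l) (l ⊕ l) R}
    (hA : A.IsAlternating) (v : l ⊕ l → R) :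
    ((vecMulVec v v + A) * J l R).charpoly = (A * J l R).charpoly := by
  have hB : ((X : R[X]) • J l R[X] + A.map C).IsAlternating :=
    (isAlternating_J.smul (X : R[X])).add (hA.map C)
  have hdet : ((X : R[X]) • J l R[X] + A.map C).det ≠ 0 := by
    refine left_ne_zero_of_mul (b := (-J l R[X]).det) ?_
    rw [← charpoly_mul_J]
    exact (charpoly_monic _).ne_zero
  have heven : Even (Fintype.card (l ⊕ l)) := by simp
  have hsplit : (X : R[X]) • J l R[X] + (vecMulVec v v + A).map C
      = (X : R[X]) • J l R[X] + A.map C + vecMulVec (C ∘ v) (C ∘ v) := by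
    ext i j : 1
    simp only [Matrix.add_apply, map_apply, vecMulVec_apply, Function.comp_apply, map_add, map_mul]
    ring
  rw [charpoly_mul_J, charpoly_mul_J, hsplit, hB.det_add_vecMulVec_self_of_det_ne_zero heven hdet]

lemma isNilpotent_vecMulVec_self_add_mul_J_iff [IsDomain R] {A : Matrix (l ⊕ l) (l ⊕ l) R}
    (hA : A.IsAlternating) (v : l ⊕ l → R) :
    IsNilpotent ((vecMulVec v v + A) * J l R) ↔ IsNilpotent (A * J l R) := by
  rw [isNilpotent_iff_charpoly, isNilpotent_iff_charpoly, charpoly_vecMulVec_self_add_mul_J hA]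

lemma vecMulVec_self_add_mul_J_conj {g : Matrix (l ⊕ l) (l ⊕ l) R}
    (hg : g ∈ symplecticGroup l R) (v : l ⊕ l → R) (A : Matrix (l ⊕ l) (l ⊕ l) R) :
    (vecMulVec (g *ᵥ v) (g *ᵥ v) + g * A * gᵀ) * J l R =
      g * ((vecMulVec v v + A) * J l R) * g⁻¹ := by
  rw [SymplecticGroup.inv_eq_symplectic_inv g hg, vecMulVec_mulVec_self, ← Matrix.add_mul,
    ← Matrix.mul_add]
  simp only [Matrix.mul_assoc, Matrix.neg_mul, Matrix.mul_neg, ← Matrix.mul_assoc (J l R) (J l R),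
    J_squared, neg_neg, Matrix.one_mul]

end Matrix

namespace Matrix

variable {ι l R : Type*} [CommRing R] [CharP R 2]

lemma neg_eq_self_of_charTwo (A : Matrix ι ι R) : -A = A :=
  Matrix.ext fun i j => CharTwo.neg_eq (A i j)

lemma isAlternating_iff_of_charTwo {A : Matrix ι ι R} :
    A.IsAlternating ↔ Aᵀ = A ∧ ∀ i, A i i = 0 := by
  rw [IsAlternating, neg_eq_self_of_charTwo]

lemma eq_of_vecMulVec_self_add_eq [NoZeroDivisors R] {v w : ι → R} {A B : Matrix ι ι R}
    (hA : ∀ i, A i i = 0) (hB : ∀ i, B i i = 0) (h : vecMulVec v v + A = vecMulVec w w + B) :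
    v = w ∧ A = B := by
  obtain rfl : v = w := funext fun i => CharTwo.sq_injective <| by
    simpa [vecMulVec_apply, hA i, hB i, sq] using congrFun (congrFun h i) i
  exact ⟨rfl, add_left_cancel h⟩

lemma eq_of_vecMulVec_self_add_mul_J_eq [NoZeroDivisors R] [Fintype l] [DecidableEq l]
    {v w : l ⊕ l → R} {A B : Matrix (l ⊕ l) (l ⊕ l) R} (hA : ∀ i, A i i = 0)
    (hB : ∀ i, B i i = 0) (h : (vecMulVec v v + A) * J l R = (vecMulVec w w + B) * J l R) :
    v = w ∧ A = B := by
  refine eq_of_vecMulVec_self_add_eq hA hB ?_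
  simpa only [Matrix.mul_assoc, J_squared, Matrix.mul_neg, Matrix.mul_one, neg_inj] using
    congrArg (· * J l R) h

lemma exists_vecMulVec_self_add_of_transpose_eq [PerfectRing R 2] {S : Matrix ι ι R}
    (hS : Sᵀ = S) : ∃ v A, A.IsAlternating ∧ vecMulVec v v + A = S := by
  let v : ι → R := fun i => (frobeniusEquiv R 2).symm (S i i)
  refine ⟨v, S - vecMulVec v v, isAlternating_iff_of_charTwo.mpr ⟨?_, fun i => ?_⟩,
    add_sub_cancel _ _⟩
  · rw [transpose_sub, hS, transpose_vecMulVec]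
  · rw [sub_apply, vecMulVec_apply, ← sq, frobeniusEquiv_symm_pow_p, sub_self]

end Matrix

section ExoticCone

variable {n : ℕ} {k : Type*} [Field k] [CharP k 2]

lemma Jmat_eq_J (R : Type*) [CommRing R] : Jmat n R = J (Fin n) R := rfl

theorem bijOn_vecMulVec_self_add_mul_Jmat [PerfectRing k 2] :
    Set.BijOn
      (fun p : (Fin n ⊕ Fin n → k) × Matrix (Fin n ⊕ Fin n) (Fin n ⊕ Fin n) k =>
        (vecMulVec p.1 p.1 + p.2) * Jmat n k)
      {p | p.2ᵀ = p.2 ∧ (∀ i, p.2 i i = 0) ∧ IsNilpotent (p.2 * Jmat n k)}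
      {M | Mᵀ * Jmat n k + Jmat n k * M = 0 ∧ IsNilpotent M} := by
  rw [Jmat_eq_J]
  refine ⟨fun p hp => ?_, fun p hp q hq h => ?_, fun M hM => ?_⟩
  · have hA : p.2.IsAlternating := isAlternating_iff_of_charTwo.mpr ⟨hp.1, hp.2.1⟩
    refine ⟨transpose_mul_J_add_J_mul_eq_zero_iff.mpr ?_,
      (isNilpotent_vecMulVec_self_add_mul_J_iff hA p.1).mpr hp.2.2⟩
    rw [Matrix.mul_assoc, J_squared, Matrix.mul_neg, Matrix.mul_one, transpose_neg, transpose_add,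
      transpose_vecMulVec, hp.1]
  · exact Prod.ext_iff.mpr (eq_of_vecMulVec_self_add_mul_J_eq hp.2.1 hq.2.1 h)
  · obtain ⟨v, A, hA, hS⟩ :=
      exists_vecMulVec_self_add_of_transpose_eq (transpose_mul_J_add_J_mul_eq_zero_iff.mp hM.1)
    have hΦ : (vecMulVec v v + A) * J (Fin n) k = M := by
      rw [hS, Matrix.mul_assoc, J_squared, Matrix.mul_neg, Matrix.mul_one, neg_eq_self_of_charTwo]
    refine ⟨(v, A), ⟨(isAlternating_iff_of_charTwo.mp hA).1, hA.2, ?_⟩, hΦ⟩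
    exact (isNilpotent_vecMulVec_self_add_mul_J_iff hA v).mp (hΦ ▸ hM.2)

variable [PerfectRing k 2]

noncomputable def exoticConeEquiv : ExoticCone n k ≃ SpNilCone n k :=
  bijOn_vecMulVec_self_add_mul_Jmat.equiv _

lemma coe_exoticConeEquiv_apply (p : ExoticCone n k) :
    (exoticConeEquiv p).1 = (vecMulVec p.1.1 p.1.1 + p.1.2) * Jmat n k :=
  rfl

lemma exoticOrbitRel_iff_spOrbitRel (p q : ExoticCone n k) :
    exoticOrbitRel n k p q ↔ spOrbitRel n k (exoticConeEquiv p) (exoticConeEquiv q) := by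
  simp only [exoticOrbitRel, spOrbitRel, coe_exoticConeEquiv_apply, Jmat_eq_J]
  refine exists_congr fun g => and_congr_right fun hg => ?_
  rw [← vecMulVec_self_add_mul_J_conj (SymplecticGroup.mem_iff.mpr hg)]
  refine ⟨fun ⟨hv, hA⟩ => by rw [hv, hA], fun h => ?_⟩
  have hgA := ((isAlternating_iff_of_charTwo.mpr ⟨p.2.1, p.2.2.1⟩).conj g).2
  exact eq_of_vecMulVec_self_add_mul_J_eq q.2.2.1 hgA h

end ExoticCone

theorem exotic_to_sp_nilcone_bijection_general {n : ℕ}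
    {k : Type*} [Field k] [IsAlgClosed k] [CharP k 2] :
    Set.BijOn
      (fun p : (Fin n ⊕ Fin n → k) × Matrix (Fin n ⊕ Fin n) (Fin n ⊕ Fin n) k =>
        (Matrix.vecMulVec p.1 p.1 + p.2) * Jmat n k)
      {p | p.2ᵀ = p.2 ∧ (∀ i, p.2 i i = 0) ∧ IsNilpotent (p.2 * Jmat n k)}
      {M | Mᵀ * Jmat n k + Jmat n k * M = 0 ∧ IsNilpotent M} ∧
    (∀ g : Matrix (Fin n ⊕ Fin n) (Fin n ⊕ Fin n) k,
      g * Jmat n k * gᵀ = Jmat n k →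
      ∀ (v : Fin n ⊕ Fin n → k) (A : Matrix (Fin n ⊕ Fin n) (Fin n ⊕ Fin n) k),
        (Matrix.vecMulVec (g.mulVec v) (g.mulVec v) + g * A * gᵀ) * Jmat n k =
          g * ((Matrix.vecMulVec v v + A) * Jmat n k) * g⁻¹) ∧
    ∃ Ψ : Quot (exoticOrbitRel n k) → Quot (spOrbitRel n k),
      Function.Bijective Ψ ∧
      ∀ (p : ExoticCone n k) (q : SpNilCone n k),
        q.1 = (Matrix.vecMulVec p.1.1 p.1.1 + p.1.2) * Jmat n k →
        Ψ (Quot.mk _ p) = Quot.mk _ q := by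
  refine ⟨bijOn_vecMulVec_self_add_mul_Jmat,
    fun g hg => vecMulVec_self_add_mul_J_conj (SymplecticGroup.mem_iff.mpr hg),
    Quot.congr exoticConeEquiv exoticOrbitRel_iff_spOrbitRel, Equiv.bijective _,
    fun p q hq => ?_⟩
  rw [Quot.congr_mk]
  congr
  exact Subtype.ext hq.symm

/-- Over an algebraically closed field of characteristic two, the map
`Φ(v, A) = (v vᵀ + A)·J` is a bijection from the exotic nilpotent cone onto
the nilpotent cone of `sp(2n, k)`; it is `Sp(2n, k)`-equivariant
(`Φ(g v, g A gᵀ) = g Φ(v, A) g⁻¹`); and consequently it induces a bijection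
between the sets of orbits. -/
theorem exotic_to_sp_nilcone_bijection {n : ℕ} (hn : 1 ≤ n)
    {k : Type*} [Field k] [IsAlgClosed k] [CharP k 2] :
    Set.BijOn
      (fun p : (Fin n ⊕ Fin n → k) × Matrix (Fin n ⊕ Fin n) (Fin n ⊕ Fin n) k =>
        (Matrix.vecMulVec p.1 p.1 + p.2) * Jmat n k)
      {p | p.2ᵀ = p.2 ∧ (∀ i, p.2 i i = 0) ∧ IsNilpotent (p.2 * Jmat n k)}
      {M | Mᵀ * Jmat n k + Jmat n k * M = 0 ∧ IsNilpotent M} ∧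
    (∀ g : Matrix (Fin n ⊕ Fin n) (Fin n ⊕ Fin n) k,
      g * Jmat n k * gᵀ = Jmat n k →
      ∀ (v : Fin n ⊕ Fin n → k) (A : Matrix (Fin n ⊕ Fin n) (Fin n ⊕ Fin n) k),
        (Matrix.vecMulVec (g.mulVec v) (g.mulVec v) + g * A * gᵀ) * Jmat n k =
          g * ((Matrix.vecMulVec v v + A) * Jmat n k) * g⁻¹) ∧
    ∃ Ψ : Quot (exoticOrbitRel n k) → Quot (spOrbitRel n k),
      Function.Bijective Ψ ∧
      ∀ (p : ExoticCone n k) (q : SpNilCone n k),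
        q.1 = (Matrix.vecMulVec p.1.1 p.1.1 + p.1.2) * Jmat n k →
        Ψ (Quot.mk _ p) = Quot.mk _ q :=
  exotic_to_sp_nilcone_bijection_general
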